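/- Reduction to squashed non-Markovianity for product spectators: Let ρ_ABCD = ω_ABC ⊗ τ_D, where ω_ABC is a state on H_A ⊗ H_B ⊗ H_C and τ_D is a state on H_D. Then T_sq(A;C|B)_ρ = N_sq(A;C|B)_ω. -/

import Mathlib

/-!
Both infima run over the same set of values. Tracing out `D` turns an extension `σ_ABCDE` of
`ω ⊗ τ` into an extension `σ_ABCE` of `ω`, and conversely `σ_ABCE ⊗ τ_D` extends `ω ⊗ τ` because
`tr τ = 1`. Since `I(A;C|BE)` only sees the `ABCE`-marginal, and the `ABCE`-marginal of
`σ_ABCE ⊗ τ_D` is `σ_ABCE` again, corresponding extensions carry the same value.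
-/

open scoped ComplexOrder

/-- A density operator (quantum state): positive semidefinite with unit trace. -/
def IsDensity {d : Type*} [Fintype d] (ρ : Matrix d d ℂ) : Prop :=
  ρ.PosSemidef ∧ ρ.trace = 1

/-- Von Neumann entropy `S(ρ) = −tr(ρ log₂ ρ)`, computed via eigenvalues
(with the convention `0 · log₂ 0 = 0`); junk value `0` on non-Hermitian input. -/
noncomputable def vnEntropy {d : Type*} [Fintype d] [DecidableEq d]
    (ρ : Matrix d d ℂ) : ℝ := by
  classical exact
    if h : ρ.IsHermitian then -∑ i, (h.eigenvalues i) * Real.logb 2 (h.eigenvalues i) else 0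

/-- Quantum conditional mutual information `I(x;z|y)_ρ = S(xy) + S(yz) − S(y) − S(xyz)`
for a state on `x ⊗ y ⊗ z` (conditioning on the middle system `y`). -/
noncomputable def qcmi {x y z : Type*} [Fintype x] [Fintype y] [Fintype z]
    [DecidableEq x] [DecidableEq y] [DecidableEq z]
    (ρ : Matrix (x × y × z) (x × y × z) ℂ) : ℝ :=
  vnEntropy (Matrix.of fun (p q : x × y) => ∑ c, ρ (p.1, p.2, c) (q.1, q.2, c))
  + vnEntropy (Matrix.of fun (p q : y × z) => ∑ a, ρ (a, p.1, p.2) (a, q.1, q.2))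
  - vnEntropy (Matrix.of fun (b b' : y) => ∑ a, ∑ c, ρ (a, b, c) (a, b', c))
  - vnEntropy ρ

/-- For a state `σ` on `A ⊗ B ⊗ C ⊗ D ⊗ E`, the conditional mutual information
`I(A;C|BE)_σ`: the spectator `D` is traced out and `BE` is the conditioning system. -/
noncomputable def qcmiACgivenBE {dA dB dC dD dE : Type*}
    [Fintype dA] [Fintype dB] [Fintype dC] [Fintype dD] [Fintype dE]
    [DecidableEq dA] [DecidableEq dB] [DecidableEq dC] [DecidableEq dE]
    (σ : Matrix ((dA × dB × dC × dD) × dE) ((dA × dB × dC × dD) × dE) ℂ) : ℝ :=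
  qcmi (Matrix.of fun (p q : dA × (dB × dE) × dC) =>
    ∑ d : dD, σ ((p.1, p.2.1.1, p.2.2, d), p.2.1.2) ((q.1, q.2.1.1, q.2.2, d), q.2.1.2))

/-- Hysteretic squashed entanglement `T_sq(A;C|B)_ρ` of a state on `A ⊗ B ⊗ C ⊗ D`:
half the infimum of `I(A;C|BE)_σ` over all state extensions `σ_ABCDE` of `ρ_ABCD`,
over all finite-dimensional extension systems `E`. -/
noncomputable def Tsq {dA dB dC dD : Type*}
    [Fintype dA] [Fintype dB] [Fintype dC] [Fintype dD]
    [DecidableEq dA] [DecidableEq dB] [DecidableEq dC] [DecidableEq dD]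
    (ρ : Matrix (dA × dB × dC × dD) (dA × dB × dC × dD) ℂ) : ℝ :=
  sInf { t : ℝ | ∃ (nE : ℕ)
    (σ : Matrix ((dA × dB × dC × dD) × Fin nE) ((dA × dB × dC × dD) × Fin nE) ℂ),
    IsDensity σ ∧ (Matrix.of fun p q => ∑ e, σ (p, e) (q, e)) = ρ ∧
    t = (1/2) * qcmiACgivenBE σ }

/-- For a state `σ` on `A ⊗ B ⊗ C ⊗ E`, the conditional mutual information
`I(A;C|BE)_σ` with conditioning system `BE`. -/
noncomputable def qcmi3 {dA dB dC dE : Type*}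
    [Fintype dA] [Fintype dB] [Fintype dC] [Fintype dE]
    [DecidableEq dA] [DecidableEq dB] [DecidableEq dC] [DecidableEq dE]
    (σ : Matrix ((dA × dB × dC) × dE) ((dA × dB × dC) × dE) ℂ) : ℝ :=
  qcmi (Matrix.of fun (p q : dA × (dB × dE) × dC) =>
    σ ((p.1, p.2.1.1, p.2.2), p.2.1.2) ((q.1, q.2.1.1, q.2.2), q.2.1.2))

/-- Squashed quantum non-Markovianity `N_sq(A;C|B)_ρ` of a state on `A ⊗ B ⊗ C`:
half the infimum of `I(A;C|BE)_σ` over all state extensions `σ_ABCE` of `ρ_ABC`. -/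
noncomputable def Nsq {dA dB dC : Type*}
    [Fintype dA] [Fintype dB] [Fintype dC]
    [DecidableEq dA] [DecidableEq dB] [DecidableEq dC]
    (ρ : Matrix (dA × dB × dC) (dA × dB × dC) ℂ) : ℝ :=
  sInf { t : ℝ | ∃ (nE : ℕ)
    (σ : Matrix ((dA × dB × dC) × Fin nE) ((dA × dB × dC) × Fin nE) ℂ),
    IsDensity σ ∧ (Matrix.of fun p q => ∑ e, σ (p, e) (q, e)) = ρ ∧
    t = (1/2) * qcmi3 σ }

/-- Choi matrix of a linear map on matrices. -/
noncomputable def choiMatrix {dX dY : Type*} [Fintype dX] [DecidableEq dX] [Fintype dY]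
    (Φ : Matrix dX dX ℂ →ₗ[ℂ] Matrix dY dY ℂ) : Matrix (dX × dY) (dX × dY) ℂ :=
  Matrix.of fun p q => Φ (Matrix.single p.1 q.1 1) p.2 q.2

/-- A quantum channel: completely positive (equivalently, PSD Choi matrix, by Choi's
theorem) and trace-preserving linear map. -/
def IsQuantumChannel {dX dY : Type*} [Fintype dX] [DecidableEq dX] [Fintype dY]
    (Φ : Matrix dX dX ℂ →ₗ[ℂ] Matrix dY dY ℂ) : Prop :=
  (choiMatrix Φ).PosSemidef ∧ ∀ ρ : Matrix dX dX ℂ, (Φ ρ).trace = ρ.trace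

/-- `(Φ ⊗ id)` applied to an operator on `X ⊗ R`. -/
noncomputable def applyLeft {dX dY dR : Type*} [Fintype dX] [DecidableEq dX]
    (Φ : Matrix dX dX ℂ →ₗ[ℂ] Matrix dY dY ℂ)
    (ρ : Matrix (dX × dR) (dX × dR) ℂ) : Matrix (dY × dR) (dY × dR) ℂ :=
  Matrix.of fun p q => ∑ a, ∑ a',
    Φ (Matrix.single a a' 1) p.1 q.1 * ρ (a, p.2) (a', q.2)

/-- `(id ⊗ Φ)` applied to an operator on `R ⊗ X`. -/
noncomputable def applyRight {dX dY dR : Type*} [Fintype dX] [DecidableEq dX]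
    (Φ : Matrix dX dX ℂ →ₗ[ℂ] Matrix dY dY ℂ)
    (ρ : Matrix (dR × dX) (dR × dX) ℂ) : Matrix (dR × dY) (dR × dY) ℂ :=
  Matrix.of fun p q => ∑ x, ∑ x',
    Φ (Matrix.single x x' 1) p.2 q.2 * ρ (p.1, x) (q.1, x')

/-- Positive semidefinite square root (the former `Matrix.PosSemidef.sqrt`). -/
noncomputable def psdSqrt {d : Type*} [Fintype d] [DecidableEq d] {A : Matrix d d ℂ}
    (hA : A.PosSemidef) : Matrix d d ℂ :=
  (hA.1.eigenvectorUnitary : Matrix d d ℂ) *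
    Matrix.diagonal ((↑) ∘ (fun x : ℝ => Real.sqrt x) ∘ hA.1.eigenvalues) *
    (star hA.1.eigenvectorUnitary : Matrix d d ℂ)

/-- Trace norm `‖X‖₁ = tr √(XᴴX)`. -/
noncomputable def traceNorm {d : Type*} [Fintype d] [DecidableEq d]
    (X : Matrix d d ℂ) : ℝ :=
  ((psdSqrt (Matrix.posSemidef_conjTranspose_mul_self X)).trace).re

/-- Fidelity `F(ρ,σ) = (tr|√ρ √σ|)²` (junk value `0` off the PSD cone). -/
noncomputable def fidelity {d : Type*} [Fintype d] [DecidableEq d]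
    (ρ σ : Matrix d d ℂ) : ℝ := by
  classical exact
    if h : ρ.PosSemidef ∧ σ.PosSemidef then (traceNorm (psdSqrt h.1 * psdSqrt h.2)) ^ 2 else 0

/-- Binary entropy (base 2), with `h₂(0) = h₂(1) = 0`. -/
noncomputable def binEnt (p : ℝ) : ℝ :=
  -(p * Real.logb 2 p) - (1 - p) * Real.logb 2 (1 - p)

/-- ABC-marginal of the pure state `|v⟩⟨v|` on `A ⊗ B ⊗ C ⊗ D`. -/
noncomputable def pureMargABC {dA dB dC dD : Type*}
    [Fintype dA] [Fintype dB] [Fintype dC] [Fintype dD]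
    (v : (dA × dB × dC × dD) → ℂ) : Matrix (dA × dB × dC) (dA × dB × dC) ℂ :=
  Matrix.of fun p q =>
    ∑ d, v (p.1, p.2.1, p.2.2, d) * (starRingEnd ℂ) (v (q.1, q.2.1, q.2.2, d))

/-- Convex-roof extension of QCMI: `co(QCMI)[ρ_ABCD]` is half the infimum of
`Σ_i p_i I(A;C|B)_{ψ^i}` over finite pure-state ensembles `{p_i, ψ^i}` for `ρ`. -/
noncomputable def coQCMI {dA dB dC dD : Type*}
    [Fintype dA] [Fintype dB] [Fintype dC] [Fintype dD]
    [DecidableEq dA] [DecidableEq dB] [DecidableEq dC] [DecidableEq dD]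
    (ρ : Matrix (dA × dB × dC × dD) (dA × dB × dC × dD) ℂ) : ℝ :=
  sInf { t : ℝ | ∃ (k : ℕ) (p : Fin k → ℝ) (v : Fin k → (dA × dB × dC × dD) → ℂ),
    (∀ i, 0 ≤ p i) ∧ (∑ i, p i) = 1 ∧
    (∀ i, ∑ a, v i a * (starRingEnd ℂ) (v i a) = 1) ∧
    ρ = ∑ i, (p i : ℂ) • Matrix.of (fun a b => v i a * (starRingEnd ℂ) (v i b)) ∧
    t = (1/2) * ∑ i, p i * qcmi (pureMargABC (v i)) }


open scoped Kronecker

namespace Matrix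

variable {X Y R : Type*} [Fintype Y]

def traceRight [AddCommMonoid R] (M : Matrix (X × Y) (X × Y) R) : Matrix X X R :=
  of fun p q => ∑ y, M (p, y) (q, y)

theorem trace_submatrix_equiv [Fintype X] [AddCommMonoid R] (M : Matrix X X R) (e : Y ≃ X) :
    (M.submatrix e e).trace = M.trace :=
  e.sum_comp M.diag

theorem trace_traceRight [Fintype X] [AddCommMonoid R] (M : Matrix (X × Y) (X × Y) R) :
    M.traceRight.trace = M.trace :=
  (Fintype.sum_prod_type M.diag).symm

theorem traceRight_kronecker [CommSemiring R] (A : Matrix X X R) (B : Matrix Y Y R) :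
    (A ⊗ₖ B).traceRight = B.trace • A := by
  ext p q
  simp [traceRight, trace, ← Finset.mul_sum, mul_comm]

theorem PosSemidef.traceRight [Ring R] [PartialOrder R] [StarRing R] [AddLeftMono R]
    {M : Matrix (X × Y) (X × Y) R} (hM : M.PosSemidef) : M.traceRight.PosSemidef := by
  have hsum : M.traceRight = ∑ y, M.submatrix (·, y) (·, y) := by
    ext p q
    simp [Matrix.traceRight, sum_apply]
  rw [hsum]
  exact posSemidef_sum _ fun y _ => hM.submatrix _

end Matrix

open Matrix

section Spectator

variable {dA dB dC dD E : Type*}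

def spectatorLast : ((dA × dB × dC) × E) × dD ≃ (dA × dB × dC × dD) × E where
  toFun x := ((x.1.1.1, x.1.1.2.1, x.1.1.2.2, x.2), x.1.2)
  invFun y := (((y.1.1, y.1.2.1, y.1.2.2.1), y.2), y.1.2.2.2)
  left_inv _ := rfl
  right_inv _ := rfl

/-- `σ_ABCE = tr_D σ_ABCDE`. -/
def traceSpectator [Fintype dD]
    (σ : Matrix ((dA × dB × dC × dD) × E) ((dA × dB × dC × dD) × E) ℂ) :
    Matrix ((dA × dB × dC) × E) ((dA × dB × dC) × E) ℂ :=
  (σ.submatrix spectatorLast spectatorLast).traceRight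

/-- `σ_ABCE ⊗ τ_D` as an operator on `ABCD ⊗ E`. -/
def tensorSpectator (σ : Matrix ((dA × dB × dC) × E) ((dA × dB × dC) × E) ℂ)
    (τ : Matrix dD dD ℂ) : Matrix ((dA × dB × dC × dD) × E) ((dA × dB × dC × dD) × E) ℂ :=
  (σ ⊗ₖ τ).submatrix spectatorLast.symm spectatorLast.symm

/-- `ω_ABC ⊗ τ_D` as an operator on `ABCD`. -/
def spectatorProduct (ω : Matrix (dA × dB × dC) (dA × dB × dC) ℂ) (τ : Matrix dD dD ℂ) :
    Matrix (dA × dB × dC × dD) (dA × dB × dC × dD) ℂ :=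
  of fun p q => ω (p.1, p.2.1, p.2.2.1) (q.1, q.2.1, q.2.2.1) * τ p.2.2.2 q.2.2.2

theorem qcmiACgivenBE_eq_qcmi3_traceSpectator
    [Fintype dA] [Fintype dB] [Fintype dC] [Fintype dD] [Fintype E]
    [DecidableEq dA] [DecidableEq dB] [DecidableEq dC] [DecidableEq E]
    (σ : Matrix ((dA × dB × dC × dD) × E) ((dA × dB × dC × dD) × E) ℂ) :
    qcmiACgivenBE σ = qcmi3 (traceSpectator σ) :=
  rfl

theorem traceSpectator_tensorSpectator [Fintype dD]
    (σ : Matrix ((dA × dB × dC) × E) ((dA × dB × dC) × E) ℂ) (τ : Matrix dD dD ℂ) :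
    traceSpectator (tensorSpectator σ τ) = τ.trace • σ := by
  simp only [traceSpectator, tensorSpectator, submatrix_submatrix, Equiv.symm_comp_self,
    submatrix_id_id, traceRight_kronecker]

theorem traceRight_traceSpectator [Fintype dD] [Fintype E]
    {σ : Matrix ((dA × dB × dC × dD) × E) ((dA × dB × dC × dD) × E) ℂ}
    {ω : Matrix (dA × dB × dC) (dA × dB × dC) ℂ} {τ : Matrix dD dD ℂ}
    (hσ : σ.traceRight = spectatorProduct ω τ) :
    (traceSpectator σ).traceRight = τ.trace • ω := by
  rw [← traceRight_kronecker]
  ext p q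
  have hpq d := congrFun₂ hσ (p.1, p.2.1, p.2.2, d) (q.1, q.2.1, q.2.2, d)
  simp only [traceRight, traceSpectator, spectatorProduct, of_apply] at hpq ⊢
  rw [Finset.sum_comm]
  exact Finset.sum_congr rfl fun d _ => hpq d

theorem traceRight_tensorSpectator [Fintype E]
    (σ : Matrix ((dA × dB × dC) × E) ((dA × dB × dC) × E) ℂ) (τ : Matrix dD dD ℂ) :
    (tensorSpectator σ τ).traceRight = spectatorProduct σ.traceRight τ := by
  ext p q
  simp [traceRight, tensorSpectator, spectatorProduct, spectatorLast, Finset.sum_mul]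

theorem IsDensity.traceSpectator
    [Fintype dA] [Fintype dB] [Fintype dC] [Fintype dD] [Fintype E]
    {σ : Matrix ((dA × dB × dC × dD) × E) ((dA × dB × dC × dD) × E) ℂ} (hσ : IsDensity σ) :
    IsDensity (traceSpectator σ) :=
  ⟨(hσ.1.submatrix _).traceRight, by
    rw [_root_.traceSpectator, trace_traceRight, trace_submatrix_equiv, hσ.2]⟩

theorem IsDensity.tensorSpectator
    [Fintype dA] [Fintype dB] [Fintype dC] [Fintype dD] [Fintype E]
    {σ : Matrix ((dA × dB × dC) × E) ((dA × dB × dC) × E) ℂ} {τ : Matrix dD dD ℂ}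
    (hσ : IsDensity σ) (hτ : IsDensity τ) : IsDensity (tensorSpectator σ τ) :=
  ⟨(hσ.1.kronecker hτ.1).submatrix _, by
    rw [_root_.tensorSpectator, trace_submatrix_equiv, trace_kronecker, hσ.2, hτ.2, one_mul]⟩

end Spectator

theorem Tsq_eq_Nsq_product_spectator_general {dA dB dC dD : Type*}
    [Fintype dA] [Fintype dB] [Fintype dC] [Fintype dD]
    [DecidableEq dA] [DecidableEq dB] [DecidableEq dC] [DecidableEq dD]
    (ω : Matrix (dA × dB × dC) (dA × dB × dC) ℂ)
    (τ : Matrix dD dD ℂ) (hτ : IsDensity τ) :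
    Tsq (Matrix.of fun (p q : dA × dB × dC × dD) =>
        ω (p.1, p.2.1, p.2.2.1) (q.1, q.2.1, q.2.2.1) * τ p.2.2.2 q.2.2.2)
      = Nsq ω := by
  change Tsq (spectatorProduct ω τ) = Nsq ω
  unfold Tsq Nsq
  congr 1
  ext t
  constructor
  · rintro ⟨nE, σ, hσ, hmarg, rfl⟩
    have hmargω := traceRight_traceSpectator hmarg
    rw [hτ.2, one_smul] at hmargω
    exact ⟨nE, traceSpectator σ, hσ.traceSpectator, hmargω, rfl⟩
  · rintro ⟨nE, σ, hσ, hmarg, rfl⟩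
    refine ⟨nE, tensorSpectator σ τ, hσ.tensorSpectator hτ, ?_, ?_⟩
    · exact (traceRight_tensorSpectator σ τ).trans (congrArg (spectatorProduct · τ) hmarg)
    · rw [qcmiACgivenBE_eq_qcmi3_traceSpectator, traceSpectator_tensorSpectator, hτ.2, one_smul]

/-- **Reduction to squashed non-Markovianity for product spectators:** if
`ρ_ABCD = ω_ABC ⊗ τ_D`, then `T_sq(A;C|B)_ρ = N_sq(A;C|B)_ω`. -/
theorem Tsq_eq_Nsq_product_spectator {dA dB dC dD : Type*}
    [Fintype dA] [Fintype dB] [Fintype dC] [Fintype dD]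
    [DecidableEq dA] [DecidableEq dB] [DecidableEq dC] [DecidableEq dD]
    (ω : Matrix (dA × dB × dC) (dA × dB × dC) ℂ) (hω : IsDensity ω)
    (τ : Matrix dD dD ℂ) (hτ : IsDensity τ) :
    Tsq (Matrix.of fun (p q : dA × dB × dC × dD) =>
        ω (p.1, p.2.1, p.2.2.1) (q.1, q.2.1, q.2.2.1) * τ p.2.2.2 q.2.2.2)
      = Nsq ω :=
  Tsq_eq_Nsq_product_spectator_general ω τ hτ
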